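/- Let p be an odd prime, Fp = ZMod p, let n ≥ 2, let k be even with 1 ≤ k ≤ n−1, and let s ∈ Fp be a nonsquare (s ≠ 0 and no t ∈ Fp satisfies t² = s). Let D_s be the k×k diagonal matrix diag(1, …, 1, s). Then the number of distinct sets of the form { Q_P·M·Q_P⁻¹ : M ∈ T(n,k,s) }, as P ranges over GL_n(Fp) and Q_P = [[P,0],[0,1]] ∈ GL_{n+1}(Fp), equals |GL_n(Fp)| divided by (p−1) · |{ U a k×k matrix over Fp : Uᵀ·D_s·U = D_s }| · |GL_{n−1−k}(Fp)| · p^{k(n−1−k) + (n−1)}. -/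

import Mathlib

open Matrix

/-- `d_i` (0-indexed): `d i = 1` for `i + 1 < k`, `d i = s` for `i + 1 = k`,
and `d i = 0` otherwise. -/
def dvec (p k : ℕ) (s : ZMod p) (i : ℕ) : ZMod p :=
  if i + 1 < k then 1 else if i + 1 = k then s else 0

/-- The `(n+1)×(n+1)` matrix `τ(r)`: it agrees with the identity except that its
`(i, n+1)` entry is `r_i` for `1 ≤ i ≤ n` and its `(n, j)` entry is `d_j·r_j`
for `1 ≤ j ≤ n-1` (stated here with 0-indexed rows and columns). -/
def tauM (p n k : ℕ) (s : ZMod p) (r : Fin n → ZMod p) :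
    Matrix (Fin (n + 1)) (Fin (n + 1)) (ZMod p) :=
  Matrix.of fun i j =>
    if i.val = j.val then 1
    else if j.val = n then (if h : i.val < n then r ⟨i.val, h⟩ else 0)
    else if i.val = n - 1 then
      dvec p k s j.val * (if h : j.val < n then r ⟨j.val, h⟩ else 0)
    else 0

/-- `T(n,k,s) = { τ(r) : r ∈ Fp^n }`. -/
def Tset (p n k : ℕ) (s : ZMod p) :
    Set (Matrix (Fin (n + 1)) (Fin (n + 1)) (ZMod p)) :=
  { M | ∃ r : Fin n → ZMod p, M = tauM p n k s r }

/-- The block matrix `Q = [[P, 0], [0, 1]]` in `M_{n+1}(Fp)`. -/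
def QofP (p n : ℕ) (P : Matrix (Fin n) (Fin n) (ZMod p)) :
    Matrix (Fin (n + 1)) (Fin (n + 1)) (ZMod p) :=
  Matrix.reindex finSumFinEquiv finSumFinEquiv
    (Matrix.fromBlocks P 0 0 (1 : Matrix (Fin 1) (Fin 1) (ZMod p)))

/-!
The conjugates of `T = T(n,k,s)` form the orbit of `T` under `P ↦ Q_P (·) Q_P⁻¹`, so their number
is `|GL_n| / |Stab(T)|`. Writing `τ(r) = [[1 + e_n ⊗ (rᵀD), r], [0, 1]]` with `D = diag(d)`,
conjugation by `Q_P` sends `τ(r)` to `[[P (1 + e_n ⊗ (rᵀD)) P⁻¹, P r], [0, 1]]`, which lies in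
`T` for every `r` exactly when `P e_n = λ e_n` and `PᵀDP = λ D` for some `λ`. In the block
decomposition `n = k + (n-1-k) + 1` such a `P` is `[[A, 0, 0], [C, E, 0], [C', v, λ]]` with
`AᵀD_sA = λD_s`, `E` invertible and `C, C', v` arbitrary. For `k` even, `D_s` is an orthogonal sum
of binary forms, and a binary form `u x² + t y²` over `F_p` (`p` odd) has similitudes of every
multiplier, since `a² + u t b²` represents every element; hence each `λ ∈ F_pˣ` contributes a
coset of `O(D_s)`.
-/

namespace Matrix

section Similitudes

variable {ι κ R : Type*} [Fintype ι] [CommRing R]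

def similitudes (D : Matrix ι ι R) (c : R) : Set (Matrix ι ι R) :=
  {A | Aᵀ * D * A = c • D}

lemma mem_similitudes {D A : Matrix ι ι R} {c : R} : A ∈ similitudes D c ↔ Aᵀ * D * A = c • D :=
  Iff.rfl

lemma similitudes_one (D : Matrix ι ι R) : similitudes D 1 = {A | Aᵀ * D * A = D} := by
  simp [similitudes]

lemma transpose_mul_mul_mul (D A B : Matrix ι ι R) :
    (A * B)ᵀ * D * (A * B) = Bᵀ * (Aᵀ * D * A) * B := by
  simp only [transpose_mul, Matrix.mul_assoc]

lemma mul_mem_similitudes {D A B : Matrix ι ι R} {c c' : R} (hA : A ∈ similitudes D c)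
    (hB : B ∈ similitudes D c') : A * B ∈ similitudes D (c * c') := by
  rw [mem_similitudes, transpose_mul_mul_mul, hA, Matrix.mul_smul, Matrix.smul_mul, hB, smul_smul]

lemma mem_similitudes_one_of_mul {D A B : Matrix ι ι R} {c : R} (hc : IsUnit c)
    (hA : A ∈ similitudes D c) (hAB : A * B ∈ similitudes D c) : B ∈ similitudes D 1 := by
  rw [mem_similitudes, transpose_mul_mul_mul, hA, Matrix.mul_smul, Matrix.smul_mul] at hAB
  rw [mem_similitudes, one_smul]
  exact hc.smul_left_cancel.mp hAB

lemma isUnit_det_of_mem_similitudes [DecidableEq ι] {D A : Matrix ι ι R} {c : R}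
    (hD : IsUnit D.det) (hc : IsUnit c) (hA : A ∈ similitudes D c) : IsUnit A.det := by
  have h := congrArg det hA
  rw [det_mul, det_mul, det_transpose, det_smul] at h
  have : IsUnit (A.det * (D.det * A.det)) := by
    rw [← mul_assoc, h]
    exact (hc.pow _).mul hD
  exact isUnit_of_mul_isUnit_left this

lemma card_similitudes_eq [DecidableEq ι] {D : Matrix ι ι R} (hD : IsUnit D.det) (c : Rˣ)
    (hne : (similitudes D c).Nonempty) :
    Nat.card (similitudes D c) = Nat.card (similitudes D 1) := by
  obtain ⟨A₀, hA₀⟩ := hne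
  have hdet := isUnit_det_of_mem_similitudes hD c.isUnit hA₀
  refine Nat.card_congr
    { toFun := fun A => ⟨A₀⁻¹ * A, mem_similitudes_one_of_mul c.isUnit hA₀ ?_⟩
      invFun := fun U => ⟨A₀ * U, by simpa using mul_mem_similitudes hA₀ U.2⟩
      left_inv := fun A => Subtype.ext (mul_nonsing_inv_cancel_left _ _ hdet)
      right_inv := fun U => Subtype.ext (nonsing_inv_mul_cancel_left _ _ hdet) }
  rw [mul_nonsing_inv_cancel_left _ _ hdet]
  exact A.2

lemma submatrix_mem_similitudes_iff [Fintype κ] {D A : Matrix ι ι R} {c : R} (e : κ ≃ ι) :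
    A.submatrix e e ∈ similitudes (D.submatrix e e) c ↔ A ∈ similitudes D c := by
  rw [mem_similitudes, mem_similitudes, transpose_submatrix, submatrix_mul_equiv,
    submatrix_mul_equiv]
  exact (reindex e.symm e.symm).injective.eq_iff (a := Aᵀ * D * A) (b := c • D)

lemma blockDiagonal_mem_similitudes [Fintype κ] [DecidableEq κ] {D A : κ → Matrix ι ι R}
    {c : R} (h : ∀ i, A i ∈ similitudes (D i) c) :
    blockDiagonal A ∈ similitudes (blockDiagonal D) c := by
  rw [mem_similitudes, blockDiagonal_transpose, ← blockDiagonal_mul, ← blockDiagonal_mul,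
    ← blockDiagonal_smul]
  exact congrArg blockDiagonal (funext h)

end Similitudes

section FiniteField

variable {F : Type*} [Field F] [Fintype F]

lemma _root_.FiniteField.exists_sq_add_mul_sq_eq (hF : Fintype.card F % 2 = 1) {t : F}
    (ht : t ≠ 0) (c : F) : ∃ a b : F, a ^ 2 + t * b ^ 2 = c := by
  open Polynomial in
  obtain ⟨a, b, h⟩ := FiniteField.exists_root_sum_quadratic (f := X ^ 2)
    (g := C t * X ^ 2 - C c) (degree_X_pow 2) (by compute_degree!) hF
  refine ⟨a, b, ?_⟩
  simp only [eval_pow, eval_X, eval_sub, eval_mul, eval_C] at h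
  linear_combination h

lemma exists_mem_similitudes_diagonal_fin_two (hF : Fintype.card F % 2 = 1) (d : Fin 2 → F)
    (hd : ∀ i, d i ≠ 0) (c : F) :
    ∃ B : Matrix (Fin 2) (Fin 2) F, B ∈ similitudes (diagonal d) c := by
  obtain ⟨a, b, hab⟩ := FiniteField.exists_sq_add_mul_sq_eq hF (mul_ne_zero (hd 0) (hd 1)) c
  -- the multiplier of `[[a, -t b], [u b, a]]` for `diag(u, t)` is the norm `a² + u t b²`
  refine ⟨!![a, -(d 1 * b); d 0 * b, a], ?_⟩
  rw [mem_similitudes, ← hab]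
  ext i j
  fin_cases i <;> fin_cases j <;> simp [Matrix.mul_apply, Fin.sum_univ_two] <;> ring

theorem exists_mem_similitudes_diagonal (hF : Fintype.card F % 2 = 1) {k : ℕ} (hk : Even k)
    (d : Fin k → F) (hd : ∀ i, d i ≠ 0) (c : F) : ∃ A, A ∈ similitudes (diagonal d) c := by
  obtain ⟨h, rfl⟩ := hk.two_dvd
  let e : Fin 2 × Fin h ≃ Fin (2 * h) := finProdFinEquiv
  choose B hB using fun i : Fin h =>
    exists_mem_similitudes_diagonal_fin_two hF (fun j => d (e (j, i))) (fun _ => hd _) c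
  refine ⟨(blockDiagonal B).submatrix e.symm e.symm, ?_⟩
  rw [← submatrix_mem_similitudes_iff e, submatrix_submatrix, Equiv.symm_comp_self,
    submatrix_id_id, submatrix_diagonal_equiv]
  have hblock := blockDiagonal_mem_similitudes hB
  rwa [blockDiagonal_diagonal] at hblock

end FiniteField

section LineSimilitudes

variable {ι κ R F : Type*} [Fintype ι] [Fintype κ]

def lineSimilitudes [CommRing R] (D : Matrix ι ι R) (e : ι → R) : Set (Matrix ι ι R) :=
  {P | ∃ l, P *ᵥ e = l • e ∧ P ∈ similitudes D l}

lemma submatrix_mem_lineSimilitudes_iff [CommRing R] (e : κ ≃ ι) {D P : Matrix ι ι R}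
    {v : ι → R} :
    P.submatrix e e ∈ lineSimilitudes (D.submatrix e e) (v ∘ e) ↔ P ∈ lineSimilitudes D v := by
  simp only [lineSimilitudes, Set.mem_ofPred_eq, submatrix_mem_similitudes_iff,
    submatrix_mulVec_equiv, Function.comp_assoc, Equiv.self_comp_symm, Function.comp_id]
  exact exists_congr fun l => and_congr_left' (e.surjective.injective_comp_right.eq_iff
    (b := l • v))

lemma forall_vecMulVec_eq_iff [Field F] [DecidableEq ι] {u e : ι → F} (he : e ≠ 0)
    {D M : Matrix ι ι F} (hD : D ≠ 0) :
    (∀ r, vecMulVec u (r ᵥ* D) = vecMulVec e (r ᵥ* M)) ↔ ∃ l : F, u = l • e ∧ M = l • D := by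
  have entry (u : ι → F) (M : Matrix ι ι F) (a b c : ι) :
      vecMulVec u (Pi.single b 1 ᵥ* M) a c = u a * M b c := by
    simp [vecMulVec_apply]
  constructor
  · intro h
    obtain ⟨i, j, hij⟩ : ∃ i j, D i j ≠ 0 := by
      by_contra! h0
      exact hD (ext h0)
    obtain ⟨a, ha⟩ : ∃ a, e a ≠ 0 := Function.ne_iff.mp he
    have hu : u = (M i j / D i j) • e := by
      funext b
      have hb := congrFun (congrFun (h (Pi.single i 1)) b) j
      rw [entry, entry] at hb
      rw [Pi.smul_apply, smul_eq_mul, div_mul_eq_mul_div, eq_div_iff hij]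
      linear_combination hb
    refine ⟨_, hu, ext fun b c => mul_left_cancel₀ ha ?_⟩
    have hbc := congrFun (congrFun (h (Pi.single b 1)) a) c
    rw [entry, entry, hu] at hbc
    simp only [smul_apply, smul_eq_mul, Pi.smul_apply] at hbc ⊢
    linear_combination -hbc
  · rintro ⟨l, rfl, rfl⟩ r
    ext a c
    simp only [vecMulVec_apply, vecMul_smul, Pi.smul_apply, smul_eq_mul]
    ring

end LineSimilitudes

section LowerBlock

variable {ι κ F : Type*} [Field F]

def lowerBlock (l : F) (A : Matrix ι ι F) (C : Matrix (κ ⊕ Fin 1) ι F) (E : Matrix κ κ F)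
    (v : κ → F) : Matrix (ι ⊕ (κ ⊕ Fin 1)) (ι ⊕ (κ ⊕ Fin 1)) F :=
  fromBlocks A 0 C (fromBlocks E 0 (replicateRow (Fin 1) v) !![l])

local notation "ω" => (Sum.inr (Sum.inr 0) : ι ⊕ (κ ⊕ Fin 1))

lemma det_lowerBlock [Fintype ι] [DecidableEq ι] [Fintype κ] [DecidableEq κ] (l : F)
    (A : Matrix ι ι F) (C : Matrix (κ ⊕ Fin 1) ι F) (E : Matrix κ κ F) (v : κ → F) :
    (lowerBlock l A C E v).det = A.det * (E.det * l) := by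
  simp [lowerBlock, det_fromBlocks_zero₁₂]

lemma lowerBlock_inj {l l' : F} {A A' : Matrix ι ι F} {C C' : Matrix (κ ⊕ Fin 1) ι F}
    {E E' : Matrix κ κ F} {v v' : κ → F} :
    lowerBlock l A C E v = lowerBlock l' A' C' E' v' ↔
      A = A' ∧ C = C' ∧ E = E' ∧ v = v' ∧ l = l' := by
  simp [lowerBlock, fromBlocks_inj]

lemma lowerBlock_mulVec_single [Fintype ι] [DecidableEq ι] [Fintype κ] [DecidableEq κ] (l : F)
    (A : Matrix ι ι F) (C : Matrix (κ ⊕ Fin 1) ι F) (E : Matrix κ κ F) (v : κ → F) :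
    lowerBlock l A C E v *ᵥ Pi.single ω 1 = l • Pi.single ω 1 := by
  ext (a | b | z) <;> simp [lowerBlock, Fin.fin_one_eq_zero]

lemma fromBlocks_mem_similitudes_iff [Fintype ι] [DecidableEq ι] [Fintype κ]
    {Ds A : Matrix ι ι F} {B : Matrix ι κ F} {C : Matrix κ ι F} {E : Matrix κ κ F} {l : F}
    (hDs : IsUnit Ds.det) (hl : IsUnit l) :
    fromBlocks A B C E ∈ similitudes (fromBlocks Ds 0 0 0) l ↔
      A ∈ similitudes Ds l ∧ B = 0 := by
  simp only [mem_similitudes, fromBlocks_transpose, fromBlocks_multiply, fromBlocks_smul,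
    Matrix.mul_zero, Matrix.zero_mul, add_zero, smul_zero, fromBlocks_inj]
  constructor
  · rintro ⟨hA, hAB, -, -⟩
    have hdet : IsUnit (Aᵀ * Ds).det := by
      rw [det_mul, det_transpose]
      exact (isUnit_det_of_mem_similitudes hDs hl hA).mul hDs
    refine ⟨hA, ?_⟩
    rw [← nonsing_inv_mul_cancel_left _ B hdet, hAB, Matrix.mul_zero]
  · rintro ⟨hA, rfl⟩
    simp [hA]

lemma lowerBlock_mem_lineSimilitudes [Fintype ι] [DecidableEq ι] [Fintype κ] [DecidableEq κ]
    {Ds A : Matrix ι ι F} {l : F} (hA : A ∈ similitudes Ds l) (C : Matrix (κ ⊕ Fin 1) ι F)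
    (E : Matrix κ κ F) (v : κ → F) :
    lowerBlock l A C E v ∈ lineSimilitudes (fromBlocks Ds 0 0 0) (Pi.single ω 1) := by
  refine ⟨l, lowerBlock_mulVec_single l A C E v, ?_⟩
  rw [mem_similitudes] at hA
  simp [lowerBlock, mem_similitudes, fromBlocks_transpose, fromBlocks_multiply, hA,
    fromBlocks_smul]

lemma exists_eq_lowerBlock [Fintype ι] [DecidableEq ι] [Fintype κ] [DecidableEq κ]
    {Ds : Matrix ι ι F} (hDs : IsUnit Ds.det) {P : Matrix (ι ⊕ (κ ⊕ Fin 1)) (ι ⊕ (κ ⊕ Fin 1)) F}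
    (hP : IsUnit P.det) (hmem : P ∈ lineSimilitudes (fromBlocks Ds 0 0 0) (Pi.single ω 1)) :
    ∃ (l : Fˣ) (A : Matrix ι ι F) (C : Matrix (κ ⊕ Fin 1) ι F) (E : Matrix κ κ F) (v : κ → F),
      A ∈ similitudes Ds l ∧ P = lowerBlock (l : F) A C E v := by
  obtain ⟨l, hcol, hsim⟩ := hmem
  have hl : l ≠ 0 := by
    rintro rfl
    rw [zero_smul] at hcol
    exact hP.ne_zero (exists_mulVec_eq_zero_iff.mp ⟨_, by simp, hcol⟩)
  rw [← fromBlocks_toBlocks P, fromBlocks_mem_similitudes_iff hDs hl.isUnit] at hsim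
  obtain ⟨hA, hB⟩ := hsim
  have hB' : ∀ a y, P (.inl a) (.inr y) = 0 := fun a y => congrFun (congrFun hB a) y
  have hcol' : ∀ x, P x ω = if x = ω then l else 0 := fun x => by
    simpa [Pi.single_apply] using congrFun hcol x
  refine ⟨Units.mk0 l hl, P.toBlocks₁₁, P.toBlocks₂₁,
    of fun i j => P (.inr (.inl i)) (.inr (.inl j)), fun j => P ω (.inr (.inl j)), hA, ?_⟩
  ext (a | i | z) (b | j | w) <;>
    simp [lowerBlock, hB', hcol', Fin.fin_one_eq_zero, toBlocks₁₁, toBlocks₂₁]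

theorem card_lineSimilitudes_fromBlocks [Fintype ι] [DecidableEq ι] [Fintype κ] [DecidableEq κ]
    [Fintype F] {Ds : Matrix ι ι F} (hDs : IsUnit Ds.det)
    (hne : ∀ c : Fˣ, (similitudes Ds c).Nonempty) :
    Nat.card {P : GL (ι ⊕ (κ ⊕ Fin 1)) F //
        ↑P ∈ lineSimilitudes (fromBlocks Ds 0 0 0) (Pi.single ω 1)} =
      Nat.card Fˣ * Nat.card (similitudes Ds 1) * Nat.card (GL κ F) *
        Fintype.card F ^ (Fintype.card κ + Fintype.card ι * (Fintype.card κ + 1)) := by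
  classical
  let param : (Σ l : Fˣ, similitudes Ds l × Matrix (κ ⊕ Fin 1) ι F × GL κ F × (κ → F)) →
      {P : GL (ι ⊕ (κ ⊕ Fin 1)) F //
        ↑P ∈ lineSimilitudes (fromBlocks Ds 0 0 0) (Pi.single ω 1)} :=
    fun ⟨l, A, C, E, v⟩ =>
      ⟨nonsingInvUnit (lowerBlock l A C E v) (by
          rw [det_lowerBlock]
          exact (isUnit_det_of_mem_similitudes hDs l.isUnit A.2).mul
            ((isUnits_det_units E).mul l.isUnit)),
        lowerBlock_mem_lineSimilitudes A.2 C E v⟩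
  have hinj : param.Injective := by
    rintro ⟨l, ⟨A, hA⟩, C, E, v⟩ ⟨l', ⟨A', hA'⟩, C', E', v'⟩ h
    have h' : lowerBlock (l : F) A C E v = lowerBlock (l' : F) A' C' E' v' :=
      congrArg Units.val (congrArg Subtype.val h)
    obtain ⟨rfl, rfl, hE, rfl, hl⟩ := lowerBlock_inj.mp h'
    obtain rfl := Units.ext hl
    obtain rfl := Units.ext hE
    rfl
  have hsurj : param.Surjective := by
    rintro ⟨P, hP⟩
    obtain ⟨l, A, C, E, v, hA, hPA⟩ := exists_eq_lowerBlock hDs (isUnits_det_units P) hP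
    have hE : IsUnit E.det := by
      have hdet := isUnits_det_units P
      rw [hPA, det_lowerBlock] at hdet
      exact isUnit_of_mul_isUnit_left (isUnit_of_mul_isUnit_right hdet)
    exact ⟨⟨l, ⟨A, hA⟩, C, nonsingInvUnit E hE, v⟩, Subtype.ext (Units.ext hPA.symm)⟩
  rw [← Nat.card_congr (Equiv.ofBijective param ⟨hinj, hsurj⟩), Nat.card_sigma]
  simp only [Nat.card_prod, card_similitudes_eq hDs _ (hne _), Finset.sum_const,
    Finset.card_univ, smul_eq_mul]
  simp only [Matrix, Nat.card_eq_fintype_card, Fintype.card_pi, Finset.prod_const,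
    Finset.card_univ, Fintype.card_sum, Fintype.card_unique]
  ring

end LowerBlock

lemma mul_one_add_vecMulVec_mul_inv_eq_iff {ι R : Type*} [Fintype ι] [DecidableEq ι]
    [CommRing R] (P : GL ι R) (u w u' w' : ι → R) :
    (P : Matrix ι ι R) * (1 + vecMulVec u w) * (↑P⁻¹ : Matrix ι ι R) = 1 + vecMulVec u' w' ↔
      vecMulVec (↑P *ᵥ u) w = vecMulVec u' (w' ᵥ* ↑P) := by
  rw [mul_add, add_mul, mul_one, ← Units.val_mul, mul_inv_cancel, Units.val_one, add_right_inj,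
    mul_vecMulVec, Units.mul_inv_eq_iff_eq_mul, vecMulVec_mul]

end Matrix

theorem MulAction.card_range_smul_eq_div {G α : Type*} [Group G] [Finite G] [MulAction G α]
    (x : α) :
    Nat.card (Set.range fun g : G => g • x) = Nat.card G / Nat.card (stabilizer G x) := by
  rw [← (stabilizer G x).card_mul_index, Nat.mul_div_cancel_left _ Nat.card_pos,
    index_stabilizer, ← Nat.card_coe_set_eq]
  rfl

section DiagonalForm

variable {p n k : ℕ} {s : ZMod p}

/-- `dMat p k n s = diag(d_1, …, d_n)` and `dMat p k k s = D_s`. -/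
def dMat (p k m : ℕ) (s : ZMod p) : Matrix (Fin m) (Fin m) (ZMod p) :=
  diagonal fun i => dvec p k s i

lemma dvec_eq_zero {i : ℕ} (hi : k ≤ i) : dvec p k s i = 0 := by
  simp only [dvec]
  rw [if_neg (by omega), if_neg (by omega)]

lemma dvec_ne_zero [Fact p.Prime] (hs : s ≠ 0) {i : ℕ} (hi : i < k) : dvec p k s i ≠ 0 := by
  unfold dvec
  split_ifs <;> first | exact one_ne_zero | exact hs | omega

lemma dMat_ne_zero [Fact p.Prime] (hk : 1 ≤ k) (hkn : k ≤ n) (hs : s ≠ 0) :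
    dMat p k n s ≠ 0 := by
  intro h
  have := congrFun (congrFun h ⟨k - 1, by omega⟩) ⟨k - 1, by omega⟩
  simp only [dMat, diagonal_apply_eq, Matrix.zero_apply] at this
  exact dvec_ne_zero hs (by omega : k - 1 < k) this

lemma isUnit_det_dMat [Fact p.Prime] (hs : s ≠ 0) : IsUnit (dMat p k k s).det := by
  rw [dMat, det_diagonal, isUnit_iff_ne_zero, Finset.prod_ne_zero_iff]
  exact fun i _ => dvec_ne_zero hs i.isLt

def finBlockEquiv {m : ℕ} (h : k + (m + 1) = n) : Fin k ⊕ (Fin m ⊕ Fin 1) ≃ Fin n :=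
  (Equiv.sumCongr (Equiv.refl _) finSumFinEquiv).trans (finSumFinEquiv.trans (finCongr h))

lemma dMat_submatrix_finBlockEquiv {m : ℕ} (h : k + (m + 1) = n) :
    (dMat p k n s).submatrix (finBlockEquiv h) (finBlockEquiv h) =
      fromBlocks (dMat p k k s) 0 0 0 := by
  ext (a | b | z) (c | d | w) <;> simp [dMat, finBlockEquiv, diagonal_apply, Fin.ext_iff] <;>
    (intros; exact dvec_eq_zero (by omega))

lemma finBlockEquiv_symm_last {m : ℕ} (h : k + (m + 1) = n) (ℓ : Fin n)
    (hℓ : ℓ.val = n - 1) : (finBlockEquiv h).symm ℓ = .inr (.inr 0) := by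
  rw [Equiv.symm_apply_eq]
  ext
  simp [finBlockEquiv, hℓ]
  omega

theorem card_lineSimilitudes_dMat [Fact p.Prime] (hodd : Odd p) (hk : k ≤ n - 1)
    (hkeven : Even k) (hs : s ≠ 0) (ℓ : Fin n) (hℓ : ℓ.val = n - 1) :
    Nat.card {P : GL (Fin n) (ZMod p) //
        ↑P ∈ lineSimilitudes (dMat p k n s) (Pi.single ℓ 1)} =
      (p - 1) * Nat.card (similitudes (dMat p k k s) 1) *
        Nat.card (GL (Fin (n - 1 - k)) (ZMod p)) * p ^ (k * (n - 1 - k) + (n - 1)) := by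
  set m := n - 1 - k
  have h : k + (m + 1) = n := by omega
  let e := finBlockEquiv h
  have hline : Pi.single ℓ 1 ∘ e = Pi.single (Sum.inr (Sum.inr 0)) (1 : ZMod p) := by
    rw [Pi.single_comp_equiv, finBlockEquiv_symm_last h ℓ hℓ]
  have hne (c : (ZMod p)ˣ) : (similitudes (dMat p k k s) c).Nonempty :=
    exists_mem_similitudes_diagonal (by rw [ZMod.card]; exact Nat.odd_iff.mp hodd) hkeven _
      (fun i => dvec_ne_zero hs i.isLt) c
  have hblock : Nat.card {P : GL (Fin n) (ZMod p) //
        ↑P ∈ lineSimilitudes (dMat p k n s) (Pi.single ℓ 1)} =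
      Nat.card {P : GL (Fin k ⊕ (Fin m ⊕ Fin 1)) (ZMod p) //
        (P : Matrix (Fin k ⊕ (Fin m ⊕ Fin 1)) (Fin k ⊕ (Fin m ⊕ Fin 1)) (ZMod p)) ∈
          lineSimilitudes (fromBlocks (dMat p k k s) 0 0 0) (Pi.single (Sum.inr (Sum.inr 0)) 1)} :=
    Nat.card_congr <| .subtypeEquiv
      (Units.mapEquiv (reindexAlgEquiv (ZMod p) (ZMod p) e.symm : _ ≃* _)).toEquiv fun P => by
        change _ ↔
          reindexAlgEquiv (ZMod p) (ZMod p) e.symm (P : Matrix (Fin n) (Fin n) (ZMod p)) ∈ _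
        rw [coe_reindexAlgEquiv, reindex_apply, Equiv.symm_symm, ← dMat_submatrix_finBlockEquiv h,
          ← hline, submatrix_mem_lineSimilitudes_iff]
  rw [hblock, card_lineSimilitudes_fromBlocks (ι := Fin k) (κ := Fin m) (F := ZMod p)
    (Ds := dMat p k k s) (isUnit_det_dMat hs) hne]
  simp only [Nat.card_eq_fintype_card, ZMod.card_units, ZMod.card, Fintype.card_fin]
  rw [show n - 1 = k + m by omega]
  ring

end DiagonalForm

section BlockConjugation

variable {p n k : ℕ} {s : ZMod p}

lemma QofP_one : QofP p n 1 = 1 := by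
  simp only [QofP, reindex_apply, fromBlocks_one]
  exact submatrix_one_equiv _

lemma QofP_mul (P R : Matrix (Fin n) (Fin n) (ZMod p)) :
    QofP p n (P * R) = QofP p n P * QofP p n R := by
  simp [QofP, reindex_apply, submatrix_mul_equiv, fromBlocks_multiply]

lemma QofP_inv (P : GL (Fin n) (ZMod p)) : (QofP p n P)⁻¹ = QofP p n ↑P⁻¹ :=
  inv_eq_right_inv (by rw [← QofP_mul, ← Units.val_mul, mul_inv_cancel, Units.val_one, QofP_one])

noncomputable instance :
    MulAction (GL (Fin n) (ZMod p)) (Matrix (Fin (n + 1)) (Fin (n + 1)) (ZMod p)) where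
  smul P M := QofP p n P * M * (QofP p n P)⁻¹
  one_smul M := by
    change QofP p n 1 * M * (QofP p n 1)⁻¹ = M
    rw [QofP_one, inv_one, Matrix.one_mul, Matrix.mul_one]
  mul_smul P R M := by
    change QofP p n (P * R) * M * (QofP p n (P * R))⁻¹ =
      QofP p n P * (QofP p n R * M * (QofP p n R)⁻¹) * (QofP p n P)⁻¹
    rw [QofP_mul, Matrix.mul_inv_rev]
    simp only [Matrix.mul_assoc]

lemma smul_eq_QofP_mul_mul_inv (P : GL (Fin n) (ZMod p))
    (M : Matrix (Fin (n + 1)) (Fin (n + 1)) (ZMod p)) :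
    P • M = QofP p n P * M * (QofP p n P)⁻¹ :=
  rfl

lemma tauM_eq_reindex (hk : k ≤ n - 1) (ℓ : Fin n) (hℓ : ℓ.val = n - 1) (r : Fin n → ZMod p) :
    tauM p n k s r = reindex finSumFinEquiv finSumFinEquiv
      (fromBlocks (1 + vecMulVec (Pi.single ℓ 1) (r ᵥ* dMat p k n s)) (replicateCol (Fin 1) r)
        0 1) := by
  ext i j
  induction i using Fin.lastCases with
  | last =>
    induction j using Fin.lastCases with
    | last => simp [tauM]
    | cast b =>
      have hb := b.isLt
      simp [tauM, hb.ne']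
      omega
  | cast a =>
    have ha := a.isLt
    induction j using Fin.lastCases with
    | last => simp [tauM, ha.ne]
    | cast b =>
      have hb := b.isLt
      by_cases hab : a = b
      · subst hab
        simp [tauM, dMat, vecMulVec_apply, vecMul_diagonal, Pi.single_apply, Fin.ext_iff, hℓ]
        exact fun h => by rw [dvec_eq_zero (by omega), mul_zero]
      · simp [tauM, dMat, vecMulVec_apply, vecMul_diagonal, Pi.single_apply, Fin.ext_iff, hℓ,
          Fin.val_ne_of_ne hab, hb.ne, mul_comm]

lemma smul_tauM_eq_tauM_iff (hk : k ≤ n - 1) (ℓ : Fin n) (hℓ : ℓ.val = n - 1)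
    (P : GL (Fin n) (ZMod p)) (r r' : Fin n → ZMod p) :
    P • tauM p n k s r = tauM p n k s r' ↔
      (P : Matrix (Fin n) (Fin n) (ZMod p)) *
          (1 + vecMulVec (Pi.single ℓ 1) (r ᵥ* dMat p k n s)) *
          (↑P⁻¹ : Matrix (Fin n) (Fin n) (ZMod p)) =
        1 + vecMulVec (Pi.single ℓ 1) (r' ᵥ* dMat p k n s) ∧ ↑P *ᵥ r = r' := by
  rw [smul_eq_QofP_mul_mul_inv, QofP_inv, tauM_eq_reindex hk ℓ hℓ, tauM_eq_reindex hk ℓ hℓ,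
    QofP, QofP, ← coe_reindexAlgEquiv (ZMod p), ← map_mul, ← map_mul,
    EmbeddingLike.apply_eq_iff_eq]
  simp [fromBlocks_multiply, fromBlocks_inj, ← replicateCol_mulVec,
    replicateCol_injective.eq_iff]

open Pointwise in
theorem smul_Tset_eq_iff [Fact p.Prime] (hk1 : 1 ≤ k) (hk : k ≤ n - 1) (hs : s ≠ 0) (ℓ : Fin n)
    (hℓ : ℓ.val = n - 1) (P : GL (Fin n) (ZMod p)) :
    P • Tset p n k s = Tset p n k s ↔
      (P : Matrix (Fin n) (Fin n) (ZMod p)) ∈ lineSimilitudes (dMat p k n s) (Pi.single ℓ 1) := by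
  have hsub : P • Tset p n k s = Tset p n k s ↔ P • Tset p n k s ⊆ Tset p n k s :=
    ⟨Eq.subset, fun h => Set.eq_of_subset_of_ncard_le h (Set.ncard_smul_set P _).ge
      (Set.toFinite _)⟩
  have hTset : P • Tset p n k s ⊆ Tset p n k s ↔
      ∀ r, ∃ r', P • tauM p n k s r = tauM p n k s r' :=
    Set.smul_set_subset_iff.trans ⟨fun h r => h ⟨r, rfl⟩, fun h _ ⟨r, hr⟩ => hr ▸ h r⟩
  have hconj (r : Fin n → ZMod p) : (∃ r', P • tauM p n k s r = tauM p n k s r') ↔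
      vecMulVec (↑P *ᵥ Pi.single ℓ 1) (r ᵥ* dMat p k n s) = vecMulVec (Pi.single ℓ 1)
        (r ᵥ* (Pᵀ * dMat p k n s * (P : Matrix (Fin n) (Fin n) (ZMod p)))) := by
    rw [exists_congr fun r' => smul_tauM_eq_tauM_iff hk ℓ hℓ P r r', exists_eq_right',
      mul_one_add_vecMulVec_mul_inv_eq_iff,
      ← vecMul_transpose (P : Matrix (Fin n) (Fin n) (ZMod p)) r, vecMul_vecMul, vecMul_vecMul,
      Matrix.mul_assoc]
  rw [hsub, hTset, forall_congr' hconj, forall_vecMulVec_eq_iff (by simp)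
    (dMat_ne_zero hk1 (by omega) hs)]
  rfl

open Pointwise in
theorem card_stabilizer_Tset [Fact p.Prime] (hodd : Odd p) (hk1 : 1 ≤ k) (hk : k ≤ n - 1)
    (hkeven : Even k) (hs : s ≠ 0) :
    Nat.card (MulAction.stabilizer (GL (Fin n) (ZMod p)) (Tset p n k s)) =
      (p - 1) * Nat.card (similitudes (dMat p k k s) 1) *
        Nat.card (GL (Fin (n - 1 - k)) (ZMod p)) * p ^ (k * (n - 1 - k) + (n - 1)) := by
  let ℓ : Fin n := ⟨n - 1, by omega⟩
  rw [← card_lineSimilitudes_dMat hodd hk hkeven hs ℓ rfl]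
  exact Nat.card_congr (Equiv.subtypeEquivRight fun P =>
    MulAction.mem_stabilizer_iff.trans (smul_Tset_eq_iff hk1 hk hs ℓ rfl P))

end BlockConjugation

theorem stmt_10_general (p : ℕ) (hp : p.Prime) (hodd : Odd p) (n k : ℕ)
    (hk1 : 1 ≤ k) (hk2 : k ≤ n - 1) (hkeven : Even k)
    (s : ZMod p) (hs : s ≠ 0) :
    Nat.card (Set.range fun P : GL (Fin n) (ZMod p) =>
        (fun M => QofP p n (P : Matrix (Fin n) (Fin n) (ZMod p)) * M *
            (QofP p n (P : Matrix (Fin n) (Fin n) (ZMod p)))⁻¹) ''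
          Tset p n k s) =
      Nat.card (GL (Fin n) (ZMod p)) /
        ((p - 1) *
          Nat.card {U : Matrix (Fin k) (Fin k) (ZMod p) //
            Uᵀ * Matrix.diagonal (fun i : Fin k => dvec p k s i.val) * U =
              Matrix.diagonal (fun i : Fin k => dvec p k s i.val)} *
          Nat.card (GL (Fin (n - 1 - k)) (ZMod p)) *
          p ^ (k * (n - 1 - k) + (n - 1))) := by
  have := Fact.mk hp
  open Pointwise in
  have horbit := MulAction.card_range_smul_eq_div (G := GL (Fin n) (ZMod p)) (Tset p n k s)
  rw [card_stabilizer_Tset hodd hk1 hk2 hkeven hs, similitudes_one] at horbit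
  exact horbit

/-- For `k` even and `s` a nonsquare, the number of distinct
conjugates of `T(n,k,s)` under `Q_P` for `P ∈ GL_n(Fp)` equals `|GL_n|`
divided by `(p-1)·|O_k^-|·|GL_{n-1-k}|·p^{k(n-1-k)+(n-1)}`, where `O_k^-` is
the group of `U` with `Uᵀ·D_s·U = D_s`, `D_s = diag(1,…,1,s)`. -/
theorem stmt_10 (p : ℕ) (hp : p.Prime) (hodd : Odd p) (n k : ℕ)
    (hn : 2 ≤ n) (hk1 : 1 ≤ k) (hk2 : k ≤ n - 1) (hkeven : Even k)
    (s : ZMod p) (hs : s ≠ 0) (hs2 : ¬∃ t : ZMod p, t ^ 2 = s) :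
    Nat.card (Set.range fun P : GL (Fin n) (ZMod p) =>
        (fun M => QofP p n (P : Matrix (Fin n) (Fin n) (ZMod p)) * M *
            (QofP p n (P : Matrix (Fin n) (Fin n) (ZMod p)))⁻¹) ''
          Tset p n k s) =
      Nat.card (GL (Fin n) (ZMod p)) /
        ((p - 1) *
          Nat.card {U : Matrix (Fin k) (Fin k) (ZMod p) //
            Uᵀ * Matrix.diagonal (fun i : Fin k => dvec p k s i.val) * U =
              Matrix.diagonal (fun i : Fin k => dvec p k s i.val)} *
          Nat.card (GL (Fin (n - 1 - k)) (ZMod p)) *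
          p ^ (k * (n - 1 - k) + (n - 1))) :=
  stmt_10_general p hp hodd n k hk1 hk2 hkeven s hs
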